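/- The τ-erasure map from clocked λ-terms to λ-terms (deleting all occurrences of τ) maps each clocked reduction step to at most one β-step: if M →c N then either erase(M) →β erase(N) (when the step is a clocked β-step) or erase(M) = erase(N) (when the step is a τ-permutation step). -/
import Mathlib


inductive Lam : Type
  | var : Nat → Lam
  | app : Lam → Lam → Lam
  | lam : Lam → Lam
deriving DecidableEq

namespace Lam

/-- shift free de Bruijn indices ≥ d up by 1 -/
def lift (d : Nat) : Lam → Lam
  | var n => if n < d then var n else var (n+1)
  | app M N => app (lift d M) (lift d N)
  | lam M => lam (lift (d+1) M)

/-- capture-avoiding substitution of N for index k -/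
def subst (k : Nat) (N : Lam) : Lam → Lam
  | var n => if n = k then N else if k < n then var (n-1) else var n
  | app A B => app (subst k N A) (subst k N B)
  | lam A => lam (subst (k+1) (lift 0 N) A)

/-- one-step β-reduction (compatible closure of (λ.M)N → M[0:=N]) -/
inductive Beta : Lam → Lam → Prop
  | beta (M N : Lam) : Beta (app (lam M) N) (subst 0 N M)
  | appL {M M'} (N) : Beta M M' → Beta (app M N) (app M' N)
  | appR (M) {N N'} : Beta N N' → Beta (app M N) (app M N')
  | lam {M M'} : Beta M M' → Beta (lam M) (lam M')

/-- finite multi-step β-reduction -/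
abbrev BetaStar : Lam → Lam → Prop := Relation.ReflTransGen Beta

/-- β-conversion -/
abbrev BetaConv : Lam → Lam → Prop := Relation.EqvGen Beta

end Lam

/-- clocked λ-terms: λ-terms with an extra unary constructor τ -/
inductive CLam : Type
  | var : Nat → CLam
  | app : CLam → CLam → CLam
  | lam : CLam → CLam
  | tau : CLam → CLam
deriving DecidableEq

namespace CLam

def lift (d : Nat) : CLam → CLam
  | var n => if n < d then var n else var (n+1)
  | app M N => app (lift d M) (lift d N)
  | lam M => lam (lift (d+1) M)
  | tau M => tau (lift d M)

def subst (k : Nat) (N : CLam) : CLam → CLam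
  | var n => if n = k then N else if k < n then var (n-1) else var n
  | app A B => app (subst k N A) (subst k N B)
  | lam A => lam (subst (k+1) (lift 0 N) A)
  | tau A => tau (subst k N A)

/-- one-step clocked reduction: compatible closure of
    (λ.M)N → τ(M[0:=N]) and (τ M)N → τ(M N) -/
inductive CStep : CLam → CLam → Prop
  | beta (M N : CLam) : CStep (app (lam M) N) (tau (subst 0 N M))
  | tauApp (M N : CLam) : CStep (app (tau M) N) (tau (app M N))
  | appL {M M'} (N) : CStep M M' → CStep (app M N) (app M' N)
  | appR (M) {N N'} : CStep N N' → CStep (app M N) (app M N')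
  | lam {M M'} : CStep M M' → CStep (lam M) (lam M')
  | tau {M M'} : CStep M M' → CStep (tau M) (tau M')

abbrev CStar : CLam → CLam → Prop := Relation.ReflTransGen CStep

/-- n-fold τ -/
def tauN : Nat → CLam → CLam
  | 0, M => M
  | n+1, M => tau (tauN n M)

end CLam

namespace CLam

/-- erase all τ symbols -/
def erase : CLam → Lam
  | var n => Lam.var n
  | app M N => Lam.app (erase M) (erase N)
  | lam M => Lam.lam (erase M)
  | tau M => erase M

end CLam

namespace Lam

/-- embed λ-terms as τ-free clocked terms -/
def toCLam : Lam → CLam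
  | var n => CLam.var n
  | app M N => CLam.app (toCLam M) (toCLam N)
  | lam M => CLam.lam (toCLam M)

end Lam

open CLam


theorem erase_lift (d : Nat) (M : CLam) : erase (CLam.lift d M) = Lam.lift d (erase M) := by
  induction M generalizing d with
  | var n => simp [CLam.lift, Lam.lift, erase]; split <;> simp [erase]
  | app A B ihA ihB => simp [CLam.lift, Lam.lift, erase, ihA, ihB]
  | lam A ih => simp [CLam.lift, Lam.lift, erase, ih]
  | tau A ih => simp [CLam.lift, erase, ih]

theorem erase_subst (k : Nat) (N M : CLam) :
    erase (CLam.subst k N M) = Lam.subst k (erase N) (erase M) := by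
  induction M generalizing k N with
  | var n => simp [CLam.subst, Lam.subst, erase]; split <;> [skip; split] <;> simp [erase]
  | app A B ihA ihB => simp [CLam.subst, Lam.subst, erase, ihA, ihB]
  | lam A ih => simp [CLam.subst, Lam.subst, erase, ih, erase_lift]
  | tau A ih => simp [CLam.subst, erase, ih]

theorem erase_step :
    ∀ M N : CLam, CStep M N →
      Lam.Beta (erase M) (erase N) ∨ erase M = erase N := by
  intro M N h
  induction h with
  | beta M N => left; simp [erase, erase_subst]; exact Lam.Beta.beta _ _
  | tauApp M N => right; simp [erase]
  | appL N _ ih =>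
      rcases ih with h | h
      · exact Or.inl (Lam.Beta.appL _ h)
      · right; simp [erase, h]
  | appR M _ ih =>
      rcases ih with h | h
      · exact Or.inl (Lam.Beta.appR _ h)
      · right; simp [erase, h]
  | lam _ ih =>
      rcases ih with h | h
      · exact Or.inl (Lam.Beta.lam h)
      · right; simp [erase, h]
  | tau _ ih => exact ih
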